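/- arXiv:2007.07161 — 3 statements merged into one kernel-verified Lean document; each statement's English description precedes it below -/
import Mathlib

section
/- Let $\{a_k\}_{k\ge 1}$ and $\{\beta_k\}_{k\ge 1}$ be sequences of nonnegative reals with $\beta_k > 0$, $a_1 \le 1$, and $a_{k+1} \le a_k(1 - a_k \beta_k)$ for all $k \ge 1$. Then for all $i \ge 0$, $a_{i+1} \le \frac{1}{1 + \sum_{k=1}^{i} \beta_k}$. -/
/-- DeVore–Temlyakov induction lemma: if `a (k+1) ≤ a k * (1 - a k * β k)` with
`a 1 ≤ 1`, all `a k ≥ 0` and all `β k > 0`, then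
`a (i+1) ≤ 1 / (1 + ∑_{k=1}^i β k)` for all `i ≥ 0`. -/
theorem stmt_0 (a β : ℕ → ℝ)
    (ha_nonneg : ∀ k ≥ 1, 0 ≤ a k)
    (hβ_pos : ∀ k ≥ 1, 0 < β k)
    (ha1 : a 1 ≤ 1)
    (hrec : ∀ k ≥ 1, a (k + 1) ≤ a k * (1 - a k * β k)) :
    ∀ i : ℕ, a (i + 1) ≤ 1 / (1 + ∑ k ∈ Finset.Icc 1 i, β k) := by
  intro i
  induction i with
  | zero => simpa using ha1
  | succ i ih =>
    have hsum : (0:ℝ) ≤ ∑ k ∈ Finset.Icc 1 i, β k :=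
      Finset.sum_nonneg fun k hk => (hβ_pos k (Finset.mem_Icc.mp hk).1).le
    set S : ℝ := 1 + ∑ k ∈ Finset.Icc 1 i, β k with hS
    clear_value S
    have hSpos : 0 < S := by linarith
    have hsucc : ∑ k ∈ Finset.Icc 1 (i+1), β k = (∑ k ∈ Finset.Icc 1 i, β k) + β (i+1) :=
      Finset.sum_Icc_succ_top (by omega) β
    have hβ : 0 < β (i+1) := hβ_pos (i+1) (by omega)
    have ha : 0 ≤ a (i+1) := ha_nonneg (i+1) (by omega)
    have hrec' := hrec (i+1) (by omega)
    have haS : a (i+1) * S ≤ 1 := (le_div_iff₀ hSpos).mp ih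
    rw [hsucc]
    have : a (i+1+1) ≤ 1 / (S + β (i+1)) := by
      rw [le_div_iff₀ (by linarith)]
      have h1 : a (i+1+1) * (S + β (i+1)) ≤ a (i+1) * (1 - a (i+1) * β (i+1)) * (S + β (i+1)) :=
        mul_le_mul_of_nonneg_right hrec' (by linarith)
      have haS0 : 0 ≤ a (i+1) * S := mul_nonneg ha hSpos.le
      have key : a (i+1) * (1 - a (i+1) * β (i+1)) * (S + β (i+1)) ≤ 1 := by
        nlinarith [sq_nonneg (a (i+1) * β (i+1) - (1 - a (i+1) * S)/2),
          mul_nonneg (by linarith : (0:ℝ) ≤ 1 - a (i+1) * S) (by linarith : (0:ℝ) ≤ 3 + a (i+1) * S)]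
      linarith
    calc a (i+1+1) ≤ 1 / (S + β (i+1)) := this
      _ = 1 / (1 + ((∑ k ∈ Finset.Icc 1 i, β k) + β (i+1))) := by rw [hS]; ring_nf
end

section
/- Let $G=(V,E)$ be a finite simple graph on $n$ vertices. For each edge $(u,v)\in E$, let $\phi_{(u,v)} = (e_u - e_v)(e_u - e_v)^\top \in \mathbb{R}^{n\times n}$, where $e_u$ is the $u$-th standard basis vector. Then for any real coefficients $x_{(u,v)}$ indexed by edges, $\sum_{(u,v),(u',v')\in E} x_{(u,v)} x_{(u',v')} \langle \phi_{(u,v)}, \phi_{(u',v')}\rangle \ge 2 \sum_{(u,v)\in E} x_{(u,v)}^2$, where $\langle A,B\rangle = \mathrm{trace}(A^\top B)$. Equivalently, the smallest eigenvalue of the Gram matrix $[\langle \phi_e, \phi_{e'}\rangle]_{e,e'\in E}$ is at least 2. -/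
open Finset

/-- The edge indicator matrix `φ_(u,v) = (e_u - e_v)(e_u - e_v)ᵀ`. -/
def phiEdge {n : ℕ} (p : Fin n × Fin n) : Matrix (Fin n) (Fin n) ℝ :=
  Matrix.vecMulVec ((Pi.single p.1 1 : Fin n → ℝ) - Pi.single p.2 1)
    ((Pi.single p.1 1 : Fin n → ℝ) - Pi.single p.2 1)

/-- The Frobenius inner product `⟨A, B⟩ = trace(Aᵀ B) = ∑ᵢⱼ Aᵢⱼ Bᵢⱼ`. -/
def frobInner {n : ℕ} (A B : Matrix (Fin n) (Fin n) ℝ) : ℝ :=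
  ∑ i, ∑ j, A i j * B i j

lemma phi_apply {n : ℕ} (p : Fin n × Fin n) (i j : Fin n) :
    phiEdge p i j = ((if i = p.1 then (1:ℝ) else 0) - (if i = p.2 then 1 else 0)) *
      ((if j = p.1 then (1:ℝ) else 0) - (if j = p.2 then 1 else 0)) := by
  simp [phiEdge, Matrix.vecMulVec_apply, Pi.single_apply]

lemma phi_symm {n : ℕ} (p : Fin n × Fin n) (i j : Fin n) :
    phiEdge p i j = phiEdge p j i := by
  rw [phi_apply, phi_apply]; ring

/-- The Gram matrix of the family `φ_e`, `e ∈ E`, for a simple graph on `n`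
vertices has smallest eigenvalue at least `2`: for all coefficients `x`,
`∑_{e,e'} x_e x_{e'} ⟨φ_e, φ_{e'}⟩ ≥ 2 ∑_e x_e²`. -/
theorem stmt_1 {n : ℕ} (E : Finset (Fin n × Fin n))
    (hE_simple : ∀ e ∈ E, e.1 ≠ e.2)
    (hE_nodup : ∀ e ∈ E, (e.2, e.1) ∉ E)
    (x : Fin n × Fin n → ℝ) :
    2 * ∑ e ∈ E, (x e) ^ 2 ≤
      ∑ e ∈ E, ∑ e' ∈ E, x e * x e' * frobInner (phiEdge e) (phiEdge e') := by
  set M : Fin n → Fin n → ℝ := fun i j => ∑ e ∈ E, x e * phiEdge e i j with hM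
  -- Step 1: RHS = ∑ i ∑ j (M i j)^2
  have hRHS : ∑ e ∈ E, ∑ e' ∈ E, x e * x e' * frobInner (phiEdge e) (phiEdge e')
      = ∑ i, ∑ j, (M i j)^2 := by
    have expand : ∀ i j, (M i j)^2 =
        ∑ e ∈ E, ∑ e' ∈ E, x e * x e' * (phiEdge e i j * phiEdge e' i j) := by
      intro i j
      show (∑ e ∈ E, x e * phiEdge e i j)^2 = _
      rw [sq, Finset.sum_mul_sum]
      exact Finset.sum_congr rfl fun e _ => Finset.sum_congr rfl fun e' _ => by ring
    calc ∑ e ∈ E, ∑ e' ∈ E, x e * x e' * frobInner (phiEdge e) (phiEdge e')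
        = ∑ e ∈ E, ∑ e' ∈ E, ∑ i, ∑ j, x e * x e' * (phiEdge e i j * phiEdge e' i j) := by
          simp only [frobInner, Finset.mul_sum]
      _ = ∑ e ∈ E, ∑ i, ∑ e' ∈ E, ∑ j, x e * x e' * (phiEdge e i j * phiEdge e' i j) :=
          Finset.sum_congr rfl fun e _ => Finset.sum_comm
      _ = ∑ i, ∑ e ∈ E, ∑ e' ∈ E, ∑ j, x e * x e' * (phiEdge e i j * phiEdge e' i j) :=
          Finset.sum_comm
      _ = ∑ i, ∑ e ∈ E, ∑ j, ∑ e' ∈ E, x e * x e' * (phiEdge e i j * phiEdge e' i j) :=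
          Finset.sum_congr rfl fun i _ => Finset.sum_congr rfl fun e _ => Finset.sum_comm
      _ = ∑ i, ∑ j, ∑ e ∈ E, ∑ e' ∈ E, x e * x e' * (phiEdge e i j * phiEdge e' i j) :=
          Finset.sum_congr rfl fun i _ => Finset.sum_comm
      _ = ∑ i, ∑ j, (M i j)^2 := by
          exact Finset.sum_congr rfl fun i _ => Finset.sum_congr rfl fun j _ => (expand i j).symm
  -- Step 2: entries
  have hentry : ∀ e ∈ E, M e.1 e.2 = -x e := by
    intro e he
    show (∑ e' ∈ E, x e' * phiEdge e' e.1 e.2) = -x e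
    rw [Finset.sum_eq_single e]
    · have h1 := hE_simple e he
      rw [phi_apply]
      simp [h1, Ne.symm h1]
    · intro e' he' hne
      rw [phi_apply]
      by_cases hA : e.1 = e'.1 ∨ e.1 = e'.2
      · by_cases hB : e.2 = e'.1 ∨ e.2 = e'.2
        · exfalso
          rcases hA with h | h <;> rcases hB with h' | h'
          · exact hE_simple e he (h.trans h'.symm)
          · exact hne (Prod.ext h.symm h'.symm)
          · refine hE_nodup e' he' ?_
            have : (e'.2, e'.1) = e := Prod.ext h.symm h'.symm
            rwa [this]
          · exact hE_simple e he (h.trans h'.symm)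
        · push_neg at hB
          simp [hB.1, hB.2]
      · push_neg at hA
        simp [hA.1, hA.2]
    · intro h; exact (h he).elim
  have hentry' : ∀ e ∈ E, M e.2 e.1 = -x e := by
    intro e he
    have : M e.2 e.1 = M e.1 e.2 := by
      show (∑ e' ∈ E, x e' * phiEdge e' e.2 e.1) = ∑ e' ∈ E, x e' * phiEdge e' e.1 e.2
      exact Finset.sum_congr rfl fun e' _ => by rw [phi_symm]
    rw [this, hentry e he]
  -- Step 3: lower bound via selected entries
  set T : Finset (Fin n × Fin n) := E ∪ E.image (fun e => (e.2, e.1)) with hT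
  have hdisj : Disjoint E (E.image (fun e => (e.2, e.1))) := by
    rw [Finset.disjoint_left]
    intro p hp hp'
    rcases Finset.mem_image.mp hp' with ⟨e, he, hpe⟩
    exact hE_nodup e he (hpe ▸ hp)
  have hsumT : ∑ p ∈ T, (M p.1 p.2)^2 = 2 * ∑ e ∈ E, (x e)^2 := by
    rw [hT, Finset.sum_union hdisj, Finset.sum_image (by
      intro a _ b _ hab
      exact Prod.ext (congrArg Prod.snd hab) (congrArg Prod.fst hab))]
    have h1 : ∑ e ∈ E, (M e.1 e.2)^2 = ∑ e ∈ E, (x e)^2 :=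
      Finset.sum_congr rfl fun e he => by rw [hentry e he]; ring
    have h2 : ∑ e ∈ E, (M e.2 e.1)^2 = ∑ e ∈ E, (x e)^2 :=
      Finset.sum_congr rfl fun e he => by rw [hentry' e he]; ring
    rw [h1, h2]; ring
  have hle : ∑ p ∈ T, (M p.1 p.2)^2 ≤ ∑ i, ∑ j, (M i j)^2 := by
    have : ∑ i, ∑ j, (M i j)^2 = ∑ p : Fin n × Fin n, (M p.1 p.2)^2 := by
      rw [Fintype.sum_prod_type]
    rw [this]
    exact Finset.sum_le_sum_of_subset_of_nonneg (Finset.subset_univ T)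
      (fun p _ _ => sq_nonneg _)
  rw [hRHS]
  calc 2 * ∑ e ∈ E, (x e)^2 = ∑ p ∈ T, (M p.1 p.2)^2 := hsumT.symm
    _ ≤ ∑ i, ∑ j, (M i j)^2 := hle
end

section
/- Let $e_1,\dots,e_n$ be the standard basis of $\mathbb{R}^n$ with $n \ge 2$. Consider the multiset $V$ consisting of the vectors $e_i/\sqrt{2}$ for $i=1,\dots,n$ together with $n-1$ copies of each $e_i/\sqrt{2(n-1)}$ for $i=1,\dots,n$. Then $\sum_{v\in V} v v^\top = I_n$, the total number of vectors is $m = n^2$, and there is a subset $S$ (the first $n$ vectors) with positive coefficients $s_i = 2$ satisfying $\sum_{i\in S} s_i v_i v_i^\top = I_n$ with $\sum_{i\in S} s_i = 2n$; moreover $2n \le n^2/\sqrt{n}$ for $n \ge 4$. -/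
open Matrix

theorem sum_vecMulVec_smul_single {ι R : Type*} [Fintype ι] [DecidableEq ι] [CommSemiring R]
    (c : R) :
    ∑ i : ι, vecMulVec (c • Pi.single i 1 : ι → R) (c • Pi.single i 1) = (c * c) • 1 := by
  simp_rw [smul_vecMulVec, vecMulVec_smul, ← single_eq_single_vecMulVec_single, ← Finset.smul_sum,
    sum_single_one, smul_smul]

theorem inv_sqrt_mul_inv_sqrt {x : ℝ} (hx : 0 ≤ x) : (√x)⁻¹ * (√x)⁻¹ = x⁻¹ := by
  rw [← mul_inv, Real.mul_self_sqrt hx]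

theorem two_mul_le_sq_div_sqrt {x : ℝ} (hx : 4 ≤ x) : 2 * x ≤ x ^ 2 / √x := by
  have h2 : 2 ≤ √x := (Real.le_sqrt zero_le_two (by linarith)).2 (by linarith)
  rw [sq, mul_div_assoc, Real.div_sqrt, mul_comm]
  exact mul_le_mul_of_nonneg_left h2 (by linarith)

/-- The explicit isotropic example: the multiset consisting of `eᵢ/√2`
(`i = 1,…,n`) together with `n-1` copies of each `eᵢ/√(2(n-1))` satisfies
`∑ v vᵀ = Iₙ`, has `m = n²` vectors, and the sub-collection of the first `n`
vectors with coefficients `sᵢ = 2` is again isotropic, with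
`K = ∑ sᵢ = 2n ≤ n²/√n` for `n ≥ 4`. -/
theorem stmt_17 {n : ℕ} (hn : 2 ≤ n)
    (v : (Fin n ⊕ (Fin (n - 1) × Fin n)) → (Fin n → ℝ))
    (hv1 : ∀ i : Fin n, v (Sum.inl i) =
      (Real.sqrt 2)⁻¹ • (Pi.single i 1 : Fin n → ℝ))
    (hv2 : ∀ k : Fin (n - 1), ∀ i : Fin n, v (Sum.inr (k, i)) =
      (Real.sqrt (2 * ((n : ℝ) - 1)))⁻¹ • (Pi.single i 1 : Fin n → ℝ)) :
    (∑ j, vecMulVec (v j) (v j) = (1 : Matrix (Fin n) (Fin n) ℝ)) ∧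
    Fintype.card (Fin n ⊕ (Fin (n - 1) × Fin n)) = n ^ 2 ∧
    (∑ i : Fin n, (2 : ℝ) • vecMulVec (v (Sum.inl i)) (v (Sum.inl i)) =
      (1 : Matrix (Fin n) (Fin n) ℝ)) ∧
    (∑ _i : Fin n, (2 : ℝ)) = 2 * n ∧
    (4 ≤ n → 2 * (n : ℝ) ≤ (n : ℝ) ^ 2 / Real.sqrt n) := by
  have hcast : (n - 1 : ℕ) = (n : ℝ) - 1 := by rw [Nat.cast_sub (by omega), Nat.cast_one]
  have hn1 : (0 : ℝ) < (n : ℝ) - 1 := by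
    have : (2 : ℝ) ≤ n := by exact_mod_cast hn
    linarith
  have hpos : (0 : ℝ) < 2 * ((n : ℝ) - 1) := by positivity
  have hfirst : ∑ i, vecMulVec (v (Sum.inl i)) (v (Sum.inl i)) = (2 : ℝ)⁻¹ • 1 := by
    simp_rw [hv1, sum_vecMulVec_smul_single, inv_sqrt_mul_inv_sqrt zero_le_two]
  have hrest : ∑ p, vecMulVec (v (Sum.inr p)) (v (Sum.inr p)) = (2 : ℝ)⁻¹ • 1 := by
    simp_rw [Fintype.sum_prod_type, hv2, sum_vecMulVec_smul_single,
      inv_sqrt_mul_inv_sqrt hpos.le, Finset.sum_const, Finset.card_univ, Fintype.card_fin,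
      ← Nat.cast_smul_eq_nsmul ℝ, smul_smul, hcast]
    rw [mul_inv, ← mul_assoc, mul_comm _ (2 : ℝ)⁻¹, mul_assoc, mul_inv_cancel₀ hn1.ne', mul_one]
  refine ⟨?_, ?_, ?_, ?_, fun h4 => two_mul_le_sq_div_sqrt (by exact_mod_cast h4)⟩
  · rw [Fintype.sum_sum_type, hfirst, hrest, ← add_smul]
    norm_num
  · simp only [Fintype.card_sum, Fintype.card_prod, Fintype.card_fin]
    nth_rewrite 1 [← one_mul n]
    rw [← add_mul, Nat.add_sub_cancel' (by omega), sq]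
  · rw [← Finset.smul_sum, hfirst, smul_smul]
    norm_num
  · simp [mul_comm]
end
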